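/- Let ω be a modulus of continuity and for n ≥ 1 set ℓ_n = 2^{−n²−n−2}. Then there exists a continuous function β : [0,1] → ℝ admitting ω as a modulus of continuity such that for every n ≥ 1 there exist 2^{n²} closed subintervals I_{n,0}, …, I_{n,2^{n²}−1} of [0,1], each of length 2ℓ_n, all of these intervals (over all n and k) being pairwise disjoint, such that on each I_{n,k} the function β attains both the value ω(ℓ_n)/2 and the value −ω(ℓ_n)/2. -/
import Mathlib


/-- A modulus of continuity: increasing, subadditive, with `ω(0) = 0 = lim_{δ→0+} ω(δ)`. -/
def IsModulus (ω : ℝ → ℝ) : Prop :=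
  ω 0 = 0 ∧ MonotoneOn ω (Set.Ici 0) ∧
    (∀ s t : ℝ, 0 ≤ s → 0 ≤ t → ω (s + t) ≤ ω s + ω t) ∧
    Filter.Tendsto ω (nhdsWithin 0 (Set.Ioi 0)) (nhds 0)

/-- `ℓ_n = 2^{−n²−n−2}`. -/
noncomputable def ell (n : ℕ) : ℝ := (2 : ℝ) ^ (-(n : ℤ) ^ 2 - (n : ℤ) - 2)

lemma ell_pos (n : ℕ) : 0 < ell n := zpow_pos (by norm_num) _

lemma ell_antitone {m n : ℕ} (h : m ≤ n) : ell n ≤ ell m := by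
  apply zpow_le_zpow_right₀ (by norm_num)
  have : (m:ℤ) ≤ (n:ℤ) := by exact_mod_cast h
  nlinarith [sq_nonneg ((m:ℤ)), sq_nonneg ((n:ℤ))]

/-- start of the block for interval `(n,k)` -/
noncomputable def aa (n k : ℕ) : ℝ := 1 - (2:ℝ) ^ (1 - (n:ℤ)) + 4 * k * ell n

lemma key_arith (n : ℕ) : 4 * (2:ℝ) ^ (n^2) * ell n = (2:ℝ) ^ (-(n:ℤ)) := by
  have h4 : (4:ℝ) = (2:ℝ) ^ (2:ℤ) := by norm_num
  have h2 : ((2:ℝ) ^ (n^2) : ℝ) = (2:ℝ) ^ ((n^2 : ℕ) : ℤ) := by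
    rw [zpow_natCast]
  rw [h4, h2, ell, ← zpow_add₀ (two_ne_zero), ← zpow_add₀ (two_ne_zero)]
  congr 1
  push_cast
  ring

lemma aa_nonneg {n : ℕ} (hn : 1 ≤ n) (k : ℕ) : 0 ≤ aa n k := by
  have h1 : (2:ℝ) ^ (1 - (n:ℤ)) ≤ (2:ℝ) ^ (0:ℤ) := by
    apply zpow_le_zpow_right₀ (by norm_num)
    omega
  have := ell_pos n
  have hk : (0:ℝ) ≤ (k:ℝ) := Nat.cast_nonneg k
  simp only [zpow_zero] at h1
  unfold aa
  nlinarith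

lemma aa_block_le {n k : ℕ} (hn : 1 ≤ n) (hk : k < 2 ^ (n^2)) :
    aa n k + 4 * ell n ≤ 1 - (2:ℝ) ^ (-(n:ℤ)) := by
  have hkk : (k:ℝ) + 1 ≤ (2:ℝ) ^ (n^2) := by
    have : (k + 1 : ℕ) ≤ 2 ^ (n^2) := hk
    exact_mod_cast this
  have h := key_arith n
  have hep := ell_pos n
  have h2 : (2:ℝ) ^ (1 - (n:ℤ)) = 2 * (2:ℝ) ^ (-(n:ℤ)) := by
    rw [show (1 - (n:ℤ)) = 1 + (-(n:ℤ)) by ring, zpow_add₀ (two_ne_zero), zpow_one]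
  have h3 : 4 * ((k:ℝ) + 1) * ell n ≤ 4 * (2:ℝ) ^ (n^2) * ell n := by
    have := mul_le_mul_of_nonneg_right hkk hep.le
    nlinarith
  unfold aa
  nlinarith

lemma aa_add_le_one {n k : ℕ} (hn : 1 ≤ n) (hk : k < 2 ^ (n^2)) :
    aa n k + 4 * ell n ≤ 1 := by
  have := aa_block_le hn hk
  have : (0:ℝ) < (2:ℝ) ^ (-(n:ℤ)) := zpow_pos (by norm_num) _
  linarith [aa_block_le hn hk]

/-- ordering of blocks -/
lemma aa_order {n k n' k' : ℕ} (hn : 1 ≤ n) (hk : k < 2 ^ (n^2))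
    (hlt : n < n' ∨ (n = n' ∧ k < k')) :
    aa n k + 4 * ell n ≤ aa n' k' := by
  rcases hlt with hnn | ⟨rfl, hkk⟩
  · have h1 : aa n k + 4 * ell n ≤ 1 - (2:ℝ) ^ (-(n:ℤ)) := aa_block_le hn hk
    have h2 : (2:ℝ) ^ (1 - (n':ℤ)) ≤ (2:ℝ) ^ (-(n:ℤ)) := by
      apply zpow_le_zpow_right₀ (by norm_num)
      omega
    have h3 : 0 ≤ 4 * (k':ℝ) * ell n' := by
      have := (ell_pos n').le
      have : (0:ℝ) ≤ (k':ℝ) := Nat.cast_nonneg k'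
      positivity
    unfold aa at h1 ⊢
    linarith
  · have : (k:ℝ) + 1 ≤ (k':ℝ) := by exact_mod_cast hkk
    have := ell_pos n
    unfold aa
    nlinarith

/-- separation of peaks in distinct intervals -/
lemma sep {n k n' k' : ℕ} (hn : 1 ≤ n) (hn' : 1 ≤ n') (hk : k < 2 ^ (n^2))
    (hk' : k' < 2 ^ (n'^2)) (hne : (n, k) ≠ (n', k'))
    {s s' : ℝ} (hs1 : 1/2 ≤ s) (hs2 : s ≤ 3/2) (hs1' : 1/2 ≤ s') (hs2' : s' ≤ 3/2) :
    ell n ≤ |(aa n k + s * ell n) - (aa n' k' + s' * ell n')| := by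
  have hep := ell_pos n
  have hep' := ell_pos n'
  rcases lt_trichotomy n n' with h | h | h
  · -- n < n' : my block before theirs, ell n' ≤ ell n
    have hord := aa_order (n' := n') (k' := k') hn hk (Or.inl h)
    have hle : ell n' ≤ ell n := ell_antitone h.le
    rw [abs_sub_comm, abs_of_nonneg (by nlinarith)]
    nlinarith
  · subst h
    rcases lt_trichotomy k k' with hkk | hkk | hkk
    · have hord := aa_order hn hk (Or.inr ⟨rfl, hkk⟩)
      rw [abs_sub_comm, abs_of_nonneg (by nlinarith)]
      nlinarith
    · exact absurd (by rw [hkk]) hne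
    · have hord := aa_order hn' hk' (Or.inr ⟨rfl, hkk⟩)
      rw [abs_of_nonneg (by nlinarith)]
      nlinarith
  · have hord := aa_order (n' := n) (k' := k) hn' hk' (Or.inl h)
    have hle : ell n ≤ ell n' := ell_antitone h.le
    rw [abs_of_nonneg (by nlinarith)]
    nlinarith

def validNK (n k : ℕ) : Prop := 1 ≤ n ∧ k < 2 ^ (n^2)

noncomputable def Fp : Set ℝ := { x | ∃ n k, validNK n k ∧ x = aa n k + (1/2) * ell n }
noncomputable def Fm : Set ℝ := { x | ∃ n k, validNK n k ∧ x = aa n k + (3/2) * ell n }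

lemma mem_Fp {n k : ℕ} (hn : 1 ≤ n) (hk : k < 2 ^ (n^2)) :
    aa n k + (1/2) * ell n ∈ Fp := ⟨n, k, ⟨hn, hk⟩, rfl⟩

lemma mem_Fm {n k : ℕ} (hn : 1 ≤ n) (hk : k < 2 ^ (n^2)) :
    aa n k + (3/2) * ell n ∈ Fm := ⟨n, k, ⟨hn, hk⟩, rfl⟩

lemma Fp_nonempty : Fp.Nonempty :=
  ⟨aa 1 0 + (1/2) * ell 1, ⟨1, 0, ⟨le_refl 1, by norm_num⟩, rfl⟩⟩

lemma Fm_nonempty : Fm.Nonempty :=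
  ⟨aa 1 0 + (3/2) * ell 1, ⟨1, 0, ⟨le_refl 1, by norm_num⟩, rfl⟩⟩

noncomputable def beta (ω : ℝ → ℝ) (x : ℝ) : ℝ :=
  (ω (Metric.infDist x Fm) - ω (Metric.infDist x Fp)) / 2

section withModulus
variable {ω : ℝ → ℝ}

lemma omega_nonneg (hω : IsModulus ω) {t : ℝ} (ht : 0 ≤ t) : 0 ≤ ω t := by
  rw [← hω.1]
  exact hω.2.1 (Set.mem_Ici.mpr le_rfl) (Set.mem_Ici.mpr ht) ht

lemma omega_lip (hω : IsModulus ω) {a b : ℝ} (ha : 0 ≤ a) (hb : 0 ≤ b) :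
    |ω a - ω b| ≤ ω |a - b| := by
  rcases le_total a b with h | h
  · have hmono := hω.2.1 (Set.mem_Ici.mpr ha) (Set.mem_Ici.mpr hb) h
    have hsub := hω.2.2.1 a (b - a) ha (by linarith)
    simp only [add_sub_cancel] at hsub
    rw [abs_of_nonpos (by linarith), abs_of_nonpos (by linarith), neg_sub, neg_sub]
    linarith
  · have hmono := hω.2.1 (Set.mem_Ici.mpr hb) (Set.mem_Ici.mpr ha) h
    have hsub := hω.2.2.1 b (a - b) hb (by linarith)
    simp only [add_sub_cancel] at hsub
    rw [abs_of_nonneg (by linarith), abs_of_nonneg (by linarith)]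
    linarith

lemma beta_modulus (hω : IsModulus ω) (x y : ℝ) : |beta ω x - beta ω y| ≤ ω |x - y| := by
  have hdm : |Metric.infDist x Fm - Metric.infDist y Fm| ≤ |x - y| := by
    rw [abs_sub_le_iff]
    constructor
    · have := Metric.infDist_le_infDist_add_dist (s := Fm) (x := x) (y := y)
      rw [Real.dist_eq] at this; linarith [le_abs_self (x - y)]
    · have := Metric.infDist_le_infDist_add_dist (s := Fm) (x := y) (y := x)
      rw [Real.dist_eq, abs_sub_comm] at this; linarith [le_abs_self (x - y)]
  have hdp : |Metric.infDist x Fp - Metric.infDist y Fp| ≤ |x - y| := by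
    rw [abs_sub_le_iff]
    constructor
    · have := Metric.infDist_le_infDist_add_dist (s := Fp) (x := x) (y := y)
      rw [Real.dist_eq] at this; linarith [le_abs_self (x - y)]
    · have := Metric.infDist_le_infDist_add_dist (s := Fp) (x := y) (y := x)
      rw [Real.dist_eq, abs_sub_comm] at this; linarith [le_abs_self (x - y)]
  have h1 : |ω (Metric.infDist x Fm) - ω (Metric.infDist y Fm)| ≤ ω |x - y| := by
    calc _ ≤ ω |Metric.infDist x Fm - Metric.infDist y Fm| :=
            omega_lip hω Metric.infDist_nonneg Metric.infDist_nonneg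
      _ ≤ ω |x - y| := hω.2.1 (Set.mem_Ici.mpr (abs_nonneg _))
            (Set.mem_Ici.mpr (abs_nonneg _)) hdm
  have h2 : |ω (Metric.infDist x Fp) - ω (Metric.infDist y Fp)| ≤ ω |x - y| := by
    calc _ ≤ ω |Metric.infDist x Fp - Metric.infDist y Fp| :=
            omega_lip hω Metric.infDist_nonneg Metric.infDist_nonneg
      _ ≤ ω |x - y| := hω.2.1 (Set.mem_Ici.mpr (abs_nonneg _))
            (Set.mem_Ici.mpr (abs_nonneg _)) hdp
  unfold beta
  rw [div_sub_div_same, abs_div]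
  rw [abs_of_nonneg (by norm_num : (0:ℝ) ≤ 2)]
  rw [div_le_iff₀ (by norm_num : (0:ℝ) < 2)]
  calc |ω (Metric.infDist x Fm) - ω (Metric.infDist x Fp) -
        (ω (Metric.infDist y Fm) - ω (Metric.infDist y Fp))|
      ≤ |ω (Metric.infDist x Fm) - ω (Metric.infDist y Fm)| +
        |ω (Metric.infDist x Fp) - ω (Metric.infDist y Fp)| := by
        rw [show ω (Metric.infDist x Fm) - ω (Metric.infDist x Fp) -
            (ω (Metric.infDist y Fm) - ω (Metric.infDist y Fp)) =
            (ω (Metric.infDist x Fm) - ω (Metric.infDist y Fm)) -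
            (ω (Metric.infDist x Fp) - ω (Metric.infDist y Fp)) by ring]
        exact abs_sub _ _
    _ ≤ ω |x - y| * 2 := by linarith

lemma beta_continuous (hω : IsModulus ω) : Continuous (beta ω) := by
  rw [Metric.continuous_iff]
  intro b ε hε
  obtain ⟨δ, hδ, hδ'⟩ := Metric.tendsto_nhdsWithin_nhds.mp hω.2.2.2 ε hε
  refine ⟨δ, hδ, fun a ha => ?_⟩
  rcases eq_or_ne a b with rfl | hab
  · simpa using hε
  · have h1 : |a - b| ∈ Set.Ioi (0:ℝ) := by
      simp only [Set.mem_Ioi]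
      exact abs_pos.mpr (sub_ne_zero.mpr hab)
    have h2 : dist |a - b| 0 < δ := by
      rw [Real.dist_eq, sub_zero, abs_abs, ← Real.dist_eq]; exact ha
    have := hδ' h1 h2
    rw [Real.dist_eq, sub_zero] at this
    calc dist (beta ω a) (beta ω b) = |beta ω a - beta ω b| := Real.dist_eq _ _
      _ ≤ ω |a - b| := beta_modulus hω a b
      _ ≤ |ω (|a - b|)| := le_abs_self _
      _ < ε := this

/-- the positive peak value -/
lemma infDist_pp_Fm {n k : ℕ} (hn : 1 ≤ n) (hk : k < 2 ^ (n^2)) :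
    Metric.infDist (aa n k + (1/2) * ell n) Fm = ell n := by
  have hep := ell_pos n
  apply le_antisymm
  · have hmem : aa n k + (3/2) * ell n ∈ Fm := ⟨n, k, ⟨hn, hk⟩, rfl⟩
    have := Metric.infDist_le_dist_of_mem (x := aa n k + (1/2) * ell n) hmem
    rw [Real.dist_eq] at this
    calc Metric.infDist (aa n k + (1/2) * ell n) Fm
        ≤ |aa n k + (1/2) * ell n - (aa n k + (3/2) * ell n)| := this
      _ = ell n := by rw [show aa n k + (1/2) * ell n - (aa n k + (3/2) * ell n) = -(ell n) by ring,
            abs_neg, abs_of_pos hep]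
  · by_contra hlt
    push_neg at hlt
    obtain ⟨y, hy, hylt⟩ := (Metric.infDist_lt_iff Fm_nonempty).mp hlt
    obtain ⟨n', k', ⟨hn', hk'⟩, rfl⟩ := hy
    rw [Real.dist_eq] at hylt
    rcases eq_or_ne (n, k) (n', k') with heq | hne
    · rw [Prod.mk.injEq] at heq
      obtain ⟨rfl, rfl⟩ := heq
      rw [show aa n k + (1/2) * ell n - (aa n k + (3/2) * ell n) = -(ell n) by ring,
        abs_neg, abs_of_pos hep] at hylt
      exact lt_irrefl _ hylt
    · have := sep hn hn' hk hk' hne (s := 1/2) (s' := 3/2)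
        (by norm_num) (by norm_num) (by norm_num) (by norm_num)
      linarith

lemma infDist_pm_Fp {n k : ℕ} (hn : 1 ≤ n) (hk : k < 2 ^ (n^2)) :
    Metric.infDist (aa n k + (3/2) * ell n) Fp = ell n := by
  have hep := ell_pos n
  apply le_antisymm
  · have hmem : aa n k + (1/2) * ell n ∈ Fp := ⟨n, k, ⟨hn, hk⟩, rfl⟩
    have := Metric.infDist_le_dist_of_mem (x := aa n k + (3/2) * ell n) hmem
    rw [Real.dist_eq] at this
    calc Metric.infDist (aa n k + (3/2) * ell n) Fp
        ≤ |aa n k + (3/2) * ell n - (aa n k + (1/2) * ell n)| := this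
      _ = ell n := by rw [show aa n k + (3/2) * ell n - (aa n k + (1/2) * ell n) = ell n by ring,
            abs_of_pos hep]
  · by_contra hlt
    push_neg at hlt
    obtain ⟨y, hy, hylt⟩ := (Metric.infDist_lt_iff Fp_nonempty).mp hlt
    obtain ⟨n', k', ⟨hn', hk'⟩, rfl⟩ := hy
    rw [Real.dist_eq] at hylt
    rcases eq_or_ne (n, k) (n', k') with heq | hne
    · rw [Prod.mk.injEq] at heq
      obtain ⟨rfl, rfl⟩ := heq
      rw [show aa n k + (3/2) * ell n - (aa n k + (1/2) * ell n) = ell n by ring,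
        abs_of_pos hep] at hylt
      exact lt_irrefl _ hylt
    · have := sep hn hn' hk hk' hne (s := 3/2) (s' := 1/2)
        (by norm_num) (by norm_num) (by norm_num) (by norm_num)
      linarith

lemma beta_pp (hω : IsModulus ω) {n k : ℕ} (hn : 1 ≤ n) (hk : k < 2 ^ (n^2)) :
    beta ω (aa n k + (1/2) * ell n) = ω (ell n) / 2 := by
  unfold beta
  rw [infDist_pp_Fm hn hk,
    Metric.infDist_zero_of_mem (mem_Fp hn hk), hω.1]
  ring

lemma beta_pm (hω : IsModulus ω) {n k : ℕ} (hn : 1 ≤ n) (hk : k < 2 ^ (n^2)) :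
    beta ω (aa n k + (3/2) * ell n) = -(ω (ell n) / 2) := by
  unfold beta
  rw [infDist_pm_Fp hn hk,
    Metric.infDist_zero_of_mem (mem_Fm hn hk), hω.1]
  ring

end withModulus

/-- there is a continuous `β : [0,1] → ℝ` admitting `ω` as a modulus
of continuity such that for every `n ≥ 1` there are `2^{n²}` closed subintervals
of `[0,1]` of length `2ℓ_n`, all pairwise disjoint (over all `n` and `k`), on each
of which `β` attains both values `±ω(ℓ_n)/2`. -/
theorem statement17 (ω : ℝ → ℝ) (hω : IsModulus ω) :
    ∃ β : ℝ → ℝ, ContinuousOn β (Set.Icc 0 1) ∧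
      (∀ x ∈ Set.Icc (0:ℝ) 1, ∀ y ∈ Set.Icc (0:ℝ) 1, |β x - β y| ≤ ω |x - y|) ∧
      ∃ a : ℕ → ℕ → ℝ,
        (∀ n, 1 ≤ n → ∀ k, k < 2 ^ (n ^ 2) →
          Set.Icc (a n k) (a n k + 2 * ell n) ⊆ Set.Icc (0:ℝ) 1 ∧
          (∃ x ∈ Set.Icc (a n k) (a n k + 2 * ell n), β x = ω (ell n) / 2) ∧
          (∃ y ∈ Set.Icc (a n k) (a n k + 2 * ell n), β y = -(ω (ell n) / 2))) ∧
        (∀ n k n' k', 1 ≤ n → 1 ≤ n' → k < 2 ^ (n ^ 2) → k' < 2 ^ (n' ^ 2) →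
          (n, k) ≠ (n', k') →
          Disjoint (Set.Icc (a n k) (a n k + 2 * ell n))
            (Set.Icc (a n' k') (a n' k' + 2 * ell n'))) := by
  refine ⟨beta ω, (beta_continuous hω).continuousOn,
    fun x _ y _ => beta_modulus hω x y, aa, fun n hn k hk => ?_, fun n k n' k' hn hn' hk hk' hne => ?_⟩
  · have hep := ell_pos n
    refine ⟨?_, ⟨aa n k + (1/2) * ell n, ?_, beta_pp hω hn hk⟩,
      ⟨aa n k + (3/2) * ell n, ?_, beta_pm hω hn hk⟩⟩
    · intro x hx
      obtain ⟨hx1, hx2⟩ := hx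
      constructor
      · linarith [aa_nonneg hn k]
      · linarith [aa_add_le_one hn hk]
    · constructor <;> nlinarith
    · constructor <;> nlinarith
  · have hep := ell_pos n
    have hep' := ell_pos n'
    rw [Set.disjoint_left]
    intro x hx hx'
    obtain ⟨hx1, hx2⟩ := hx
    obtain ⟨hx1', hx2'⟩ := hx'
    rcases lt_trichotomy n n' with h | h | h
    · have := aa_order (n' := n') (k' := k') hn hk (Or.inl h); linarith
    · subst h
      rcases lt_trichotomy k k' with hkk | hkk | hkk
      · have := aa_order hn hk (Or.inr ⟨rfl, hkk⟩); linarith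
      · exact hne (by rw [hkk])
      · have := aa_order hn' hk' (Or.inr ⟨rfl, hkk⟩); linarith
    · have := aa_order (n' := n) (k' := k) hn' hk' (Or.inl h); linarith
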